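/- For all integers n and k with 1 ≤ k ≤ n, the unsigned Stirling numbers of the first kind satisfy the upper bound |S₁(n,k)| ≤ n! / ( (1 − e^{−1})^n · k! ). -/

import Mathlib

open Finset Filter Real

/-- Unsigned Stirling numbers of the first kind `|S₁(n,l)|`: the coefficients in the
expansion of the rising factorial `z(z+1)⋯(z+n−1) = Σ_l |S₁(n,l)| z^l`. -/
noncomputable def S1 (n l : ℕ) : ℕ := (ascPochhammer ℕ n).coeff l

/-!
The exponential generating function of the `k`-th column, `Σ_m |S₁(m,k)| z^m / m!`, is
`(-log (1 - z))^k / k!`. Only the inequality "partial sum ≤ `(-log (1 - z))^k / k!`" on `[0, 1)` is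
needed, and it follows by induction on `k`: the recurrence
`|S₁(m+1,k+1)| = m |S₁(m,k+1)| + |S₁(m,k)|` gives `(1 - z) P'_{k+1} ≤ P_k` for the partial sums,
while the right-hand side for `k + 1` has derivative `(1 - z)⁻¹` times the one for `k`, so the two
sides can be compared by their derivatives. As all coefficients are nonnegative, one term is at most
the partial sum; at `z = 1 - e⁻¹` the bound becomes `|S₁(n,k)| (1 - e⁻¹)^n / n! ≤ 1 / k!`.
-/

open Nat (stirlingFirst stirlingFirst_succ_succ)
open scoped Nat

theorem S1_succ_succ (n k : ℕ) : S1 (n + 1) (k + 1) = n * S1 n (k + 1) + S1 n k := by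
  rw [S1, S1, S1, ascPochhammer_succ_right, mul_add, Polynomial.coeff_add, Polynomial.coeff_mul_X,
    ← Polynomial.C_eq_natCast, Polynomial.coeff_mul_C, Nat.cast_id, mul_comm, add_comm]

theorem S1_eq_stirlingFirst : ∀ n k, S1 n k = stirlingFirst n k
  | 0, 0 => by simp [S1]
  | 0, k + 1 => by simp [S1, Polynomial.coeff_one]
  | n + 1, 0 => by simp [S1, Polynomial.coeff_zero_eq_eval_zero]
  | n + 1, k + 1 => by
    rw [S1_succ_succ, stirlingFirst_succ_succ, S1_eq_stirlingFirst n k,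
      S1_eq_stirlingFirst n (k + 1)]

theorem hasDerivAt_neg_log_one_sub_pow_div_factorial (k : ℕ) {t : ℝ} (ht : t < 1) :
    HasDerivAt (fun u => (-log (1 - u)) ^ (k + 1) / (k + 1)!)
      ((-log (1 - t)) ^ k / k ! * (1 - t)⁻¹) t := by
  have hlog : HasDerivAt (fun u => -log (1 - u)) (1 - t)⁻¹ t := by
    have h : HasDerivAt (fun u : ℝ => 1 - u) (-1) t := by simpa using (hasDerivAt_id t).const_sub 1
    simpa [div_eq_inv_mul] using (h.log (sub_ne_zero.2 ht.ne')).fun_neg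
  refine ((hlog.pow (k + 1)).div_const ((k + 1)! : ℝ)).congr_deriv ?_
  rw [Nat.factorial_succ]
  push_cast
  field_simp

namespace StirlingFirstEGF

noncomputable def coeff (k m : ℕ) : ℝ := stirlingFirst m k / m !

noncomputable def partialSum (k N : ℕ) (z : ℝ) : ℝ := ∑ m ∈ range N, coeff k m * z ^ m

noncomputable def partialSumDeriv (k N : ℕ) (z : ℝ) : ℝ :=
  ∑ m ∈ range N, coeff k m * (m * z ^ (m - 1))

theorem coeff_nonneg (k m : ℕ) : 0 ≤ coeff k m := by
  unfold coeff; positivity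

theorem succ_mul_coeff_succ_succ (k m : ℕ) :
    ((m : ℝ) + 1) * coeff (k + 1) (m + 1) = coeff k m + m * coeff (k + 1) m := by
  have : (m : ℝ) + 1 ≠ 0 := by positivity
  simp only [coeff, stirlingFirst_succ_succ, Nat.factorial_succ]
  push_cast
  field_simp
  ring

theorem partialSum_zero_left_le_one (N : ℕ) (z : ℝ) : partialSum 0 N z ≤ 1 := by
  rcases N with _ | N <;> simp [partialSum, coeff, sum_range_succ']

theorem partialSum_succ_apply_zero (k N : ℕ) : partialSum (k + 1) N 0 = 0 := by
  apply sum_eq_zero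
  rintro (_ | m) -
  · simp [coeff]
  · simp

theorem partialSum_le_partialSum_succ (k N : ℕ) {z : ℝ} (hz : 0 ≤ z) :
    partialSum k N z ≤ partialSum k (N + 1) z := by
  have := coeff_nonneg k N
  rw [partialSum, partialSum, sum_range_succ]
  exact le_add_of_nonneg_right (by positivity)

theorem hasDerivAt_partialSum (k N : ℕ) (z : ℝ) :
    HasDerivAt (partialSum k N) (partialSumDeriv k N z) z := by
  unfold partialSum partialSumDeriv
  exact HasDerivAt.fun_sum fun m _ => (hasDerivAt_pow m z).const_mul (coeff k m)

theorem partialSumDeriv_succ (k N : ℕ) (z : ℝ) :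
    partialSumDeriv (k + 1) (N + 1) z =
      partialSum k N z + ∑ m ∈ range N, m * coeff (k + 1) m * z ^ m := by
  rw [partialSumDeriv, sum_range_succ', partialSum, ← sum_add_distrib]
  simp only [CharP.cast_eq_zero, zero_mul, mul_zero, add_zero, add_tsub_cancel_right]
  refine sum_congr rfl fun m _ => ?_
  rw [← add_mul, ← succ_mul_coeff_succ_succ]
  push_cast
  ring

theorem mul_partialSumDeriv (k N : ℕ) (z : ℝ) :
    z * partialSumDeriv k N z = ∑ m ∈ range N, m * coeff k m * z ^ m := by
  rw [partialSumDeriv, mul_sum]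
  refine sum_congr rfl fun m _ => ?_
  rcases m with _ | m
  · simp
  · rw [add_tsub_cancel_right, pow_succ]; ring

theorem one_sub_mul_partialSumDeriv_succ_le (k N : ℕ) {z : ℝ} (hz : 0 ≤ z) :
    (1 - z) * partialSumDeriv (k + 1) N z ≤ partialSum k N z := by
  rcases N with _ | N
  · simp [partialSumDeriv, partialSum]
  · have hz_mul : ∑ m ∈ range N, m * coeff (k + 1) m * z ^ m ≤
        z * partialSumDeriv (k + 1) (N + 1) z := by
      rw [mul_partialSumDeriv, sum_range_succ]
      have := coeff_nonneg (k + 1) N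
      exact le_add_of_nonneg_right (by positivity)
    have hderiv := partialSumDeriv_succ k N z
    have hmono := partialSum_le_partialSum_succ k N hz
    linarith

theorem partialSum_le (k N : ℕ) {z : ℝ} (hz0 : 0 ≤ z) (hz1 : z < 1) :
    partialSum k N z ≤ (-log (1 - z)) ^ k / k ! := by
  induction k generalizing N z with
  | zero => simpa using partialSum_zero_left_le_one N z
  | succ k ih =>
    have hB : ∀ t ∈ Set.Icc 0 z, HasDerivAt (fun u => (-log (1 - u)) ^ (k + 1) / (k + 1)!)
        ((-log (1 - t)) ^ k / k ! * (1 - t)⁻¹) t :=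
      fun t ht => hasDerivAt_neg_log_one_sub_pow_div_factorial k (ht.2.trans_lt hz1)
    refine image_le_of_deriv_right_le_deriv_boundary
      (fun t _ => (hasDerivAt_partialSum (k + 1) N t).continuousAt.continuousWithinAt)
      (fun t _ => (hasDerivAt_partialSum (k + 1) N t).hasDerivWithinAt) ?_
      (fun t ht => (hB t ht).continuousAt.continuousWithinAt)
      (fun t ht => (hB t (Set.Ico_subset_Icc_self ht)).hasDerivWithinAt) ?_ ⟨hz0, le_rfl⟩
    · simp [partialSum_succ_apply_zero]
    · rintro t ⟨ht0, htz⟩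
      rw [← div_eq_mul_inv, le_div_iff₀ (by linarith), mul_comm]
      exact (one_sub_mul_partialSumDeriv_succ_le k N ht0).trans (ih N ht0 (by linarith))

end StirlingFirstEGF

open StirlingFirstEGF in
theorem stirlingFirst_mul_pow_div_factorial_le (n k : ℕ) {z : ℝ} (hz0 : 0 ≤ z) (hz1 : z < 1) :
    stirlingFirst n k * z ^ n / n ! ≤ (-log (1 - z)) ^ k / k ! := calc
  _ = coeff k n * z ^ n := by rw [coeff]; ring
  _ ≤ partialSum k (n + 1) z :=
    single_le_sum (f := fun m => coeff k m * z ^ m)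
      (fun m _ => mul_nonneg (coeff_nonneg k m) (pow_nonneg hz0 m)) (self_mem_range_succ n)
  _ ≤ _ := partialSum_le k (n + 1) hz0 hz1

theorem stirling_upper_bound_general (n k : ℕ) :
    (S1 n k : ℝ) ≤
      (Nat.factorial n : ℝ) / ((1 - Real.exp (-1)) ^ n * (Nat.factorial k : ℝ)) := by
  have he : Real.exp (-1) < 1 := Real.exp_lt_one_iff.2 (by norm_num)
  have hx : 0 < 1 - Real.exp (-1) := by linarith
  have hbound := stirlingFirst_mul_pow_div_factorial_le n k hx.le
    (by linarith [Real.exp_pos (-1)])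
  rw [sub_sub_cancel, Real.log_exp, neg_neg, one_pow,
    div_le_div_iff₀ (by positivity) (by positivity), one_mul] at hbound
  rw [S1_eq_stirlingFirst, le_div_iff₀ (by positivity), ← mul_assoc]
  exact hbound

/-- For `1 ≤ k ≤ n`, the unsigned Stirling numbers of the first kind satisfy
`|S₁(n,k)| ≤ n! / ((1 − e⁻¹)^n k!)`. -/
theorem stirling_upper_bound (n k : ℕ) (hk : 1 ≤ k) (hkn : k ≤ n) :
    (S1 n k : ℝ) ≤
      (Nat.factorial n : ℝ) / ((1 - Real.exp (-1)) ^ n * (Nat.factorial k : ℝ)) :=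
  stirling_upper_bound_general n k
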